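/- arXiv:2110.04882 — 4 statements merged into one kernel-verified Lean document; each statement's English description precedes it below -/
import Mathlib

section
/- Let G : ℝ^m → ℝ^n be linear, W : ℝ^n → ℝ^{n−k} and A : ℝ^n → ℝ^ℓ be linear with A and W jointly surjective onto ℝ^ℓ × ℝ^{n−k} restricted appropriately. Suppose (MFCQ): W∘G is surjective and there exists x̂ with W G x̂ = 0 and A G x̂ < 0 componentwise. Then (ZKRCQ) holds: Image(G) − {y ∈ ℝ^n : W y = 0, A y ≤ 0} = ℝ^n. -/
open Filter Topology

theorem exists_forall_add_mul_nonpos {ι : Type*} [Finite ι] (u v : ι → ℝ) (hv : ∀ i, v i < 0) :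
    ∃ t : ℝ, ∀ i, u i + t * v i ≤ 0 :=
  (eventually_all.2 fun i =>
    (tendsto_atBot_add_const_left atTop (u i)
      (tendsto_id.atTop_mul_const_of_neg (hv i))).eventually_le_atBot 0).exists

theorem stmt_6 {m n l k : ℕ}
    (G : (Fin m → ℝ) →ₗ[ℝ] (Fin n → ℝ))
    (W : (Fin n → ℝ) →ₗ[ℝ] (Fin (n - k) → ℝ))
    (A : (Fin n → ℝ) →ₗ[ℝ] (Fin l → ℝ))
    (hWG : Function.Surjective (fun x => W (G x)))
    (hx : ∃ xhat : Fin m → ℝ, W (G xhat) = 0 ∧ ∀ i, A (G xhat) i < 0) :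
    ∀ y : Fin n → ℝ, ∃ (x : Fin m → ℝ) (c : Fin n → ℝ),
      W c = 0 ∧ (∀ i, A c i ≤ 0) ∧ G x - c = y := by
  obtain ⟨xhat, hW_xhat, hA_xhat⟩ := hx
  intro y
  -- `G x₀` matches `y` modulo `ker W`; a large multiple of `xhat` then makes `A` nonpositive
  -- without changing `W`.
  obtain ⟨x₀, hx₀⟩ := hWG (W y)
  obtain ⟨t, ht⟩ := exists_forall_add_mul_nonpos (A (G x₀ - y)) (A (G xhat)) hA_xhat
  refine ⟨x₀ + t • xhat, G (x₀ + t • xhat) - y, ?_, fun i => ?_, sub_sub_cancel _ _⟩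
  · simpa [hW_xhat, sub_eq_zero] using hx₀
  · simpa [add_sub_right_comm] using ht i
end

section
/- Let f : ℝ^m → ℝ and G : ℝ^m → ℝ^n be linear maps, and K ⊆ ℝ^n a polyhedral convex cone K = {y : A y ≤ 0, W y = 0} with A, W linear. Suppose f(v) ≥ 0 for all v with G v ∈ K, and suppose Image(G) − K = ℝ^n. Then there exists μ ∈ (ℝ^n)* with f + μ∘G = 0 and μ ∈ K° (the polar cone of K). -/
/-!
The functional `G x ↦ f x` is well defined on `range G`, since `f ≥ 0` on `G⁻¹ K` forces
`ker G ≤ ker f`, and it is nonnegative on `range G ∩ K`. The constraint qualification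
`range G - K = ℝⁿ` is exactly the hypothesis `range G + (-K) = ℝⁿ` of M. Riesz's extension
theorem, which extends this functional to `-μ` on all of `ℝⁿ`, still nonnegative on `K`.
-/

namespace LinearMap

variable {R E F M : Type*} [CommRing R] [AddCommGroup E] [Module R E] [AddCommGroup F]
  [Module R F] [AddCommGroup M] [Module R M]

noncomputable def ofRange (G : E →ₗ[R] F) (f : E →ₗ[R] M) (h : ker G ≤ ker f) : range G →ₗ[R] M :=
  (ker G).liftQ f h ∘ₗ G.quotKerEquivRange.symm.toLinearMap

@[simp]
theorem ofRange_apply (G : E →ₗ[R] F) (f : E →ₗ[R] M) (h : ker G ≤ ker f) (x : E) :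
    G.ofRange f h ⟨G x, mem_range_self G x⟩ = f x := by
  simp [ofRange]

end LinearMap

theorem LinearMap.ker_le_ker_of_nonneg {E F : Type*} [AddCommGroup E] [Module ℝ E]
    [AddCommGroup F] [Module ℝ F] {G : E →ₗ[ℝ] F} {f : E →ₗ[ℝ] ℝ}
    (h : ∀ x, G x = 0 → 0 ≤ f x) : ker G ≤ ker f := by
  intro x hx
  have hneg : 0 ≤ f (-x) := h (-x) (by simp [mem_ker.mp hx])
  rw [map_neg] at hneg
  exact mem_ker.mpr (le_antisymm (by linarith) (h x hx))

theorem exists_lagrange_multiplier_of_nonneg {E F : Type*} [AddCommGroup E] [Module ℝ E]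
    [AddCommGroup F] [Module ℝ F] (K : PointedCone ℝ F) (f : E →ₗ[ℝ] ℝ) (G : E →ₗ[ℝ] F)
    (hpos : ∀ x, G x ∈ K → 0 ≤ f x) (hreg : ∀ y, ∃ x, ∃ c ∈ K, G x - c = y) :
    ∃ μ : F →ₗ[ℝ] ℝ, (∀ x, f x + μ (G x) = 0) ∧ ∀ y ∈ K, μ y ≤ 0 := by
  have hker : LinearMap.ker G ≤ LinearMap.ker f :=
    LinearMap.ker_le_ker_of_nonneg fun x hx => hpos x (hx ▸ K.zero_mem)
  let φ : F →ₗ.[ℝ] ℝ := ⟨LinearMap.range G, G.ofRange f hker⟩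
  obtain ⟨g, hgφ, hgK⟩ := riesz_extension K φ
    (by
      rintro ⟨_, x, rfl⟩ hx
      simpa [φ] using hpos x hx)
    (by
      intro y
      obtain ⟨x, c, hc, hxc⟩ := hreg (-y)
      refine ⟨⟨G x, LinearMap.mem_range_self G x⟩, ?_⟩
      rwa [show G x + y = c by rw [← neg_neg y, ← hxc]; abel])
  refine ⟨-g, fun x => ?_, fun y hy => neg_nonpos.mpr (hgK y hy)⟩
  have hgx : g (G x) = f x := by simpa [φ] using hgφ ⟨G x, LinearMap.mem_range_self G x⟩
  simp [hgx]

def polyhedralCone {F V ι : Type*} [AddCommGroup F] [Module ℝ F] [AddCommGroup V] [Module ℝ V]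
    (A : F →ₗ[ℝ] ι → ℝ) (W : F →ₗ[ℝ] V) : PointedCone ℝ F where
  carrier := {y | (∀ i, A y i ≤ 0) ∧ W y = 0}
  add_mem' := fun ⟨hy₁, hy₂⟩ ⟨hz₁, hz₂⟩ =>
    ⟨fun i => by simpa using add_nonpos (hy₁ i) (hz₁ i), by simp [hy₂, hz₂]⟩
  zero_mem' := ⟨fun i => by simp, by simp⟩
  smul_mem' := fun c y ⟨hy₁, hy₂⟩ =>
    ⟨fun i => by
      rw [LinearMap.map_smul_of_tower, Pi.smul_apply]
      exact smul_nonpos_of_nonneg_of_nonpos bot_le (hy₁ i),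
    by simp [hy₂]⟩

theorem stmt_9 {m n l k : ℕ}
    (f : (Fin m → ℝ) →ₗ[ℝ] ℝ)
    (G : (Fin m → ℝ) →ₗ[ℝ] (Fin n → ℝ))
    (A : (Fin n → ℝ) →ₗ[ℝ] (Fin l → ℝ))
    (W : (Fin n → ℝ) →ₗ[ℝ] (Fin (n - k) → ℝ))
    (K : Set (Fin n → ℝ)) (hK : K = {y | (∀ i, A y i ≤ 0) ∧ W y = 0})
    (hpos : ∀ v, G v ∈ K → 0 ≤ f v)
    (hZKR : ∀ y : Fin n → ℝ, ∃ (x : Fin m → ℝ) (c : Fin n → ℝ), c ∈ K ∧ G x - c = y) :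
    ∃ μ : (Fin n → ℝ) →ₗ[ℝ] ℝ, (∀ v, f v + μ (G v) = 0) ∧ ∀ y ∈ K, μ y ≤ 0 := by
  subst hK
  exact exists_lagrange_multiplier_of_nonneg (polyhedralCone A W) f G hpos hZKR
end

section
/- Let G : ℝ^m → ℝ^n be linear, K ⊆ ℝ^n a closed convex cone with Image(G) − K = ℝ^n, and let c ∈ (ℝ^m)*. Then the set Λ = {μ ∈ (ℝ^n)* : c + μ∘G = 0 and μ ∈ K°} is compact. -/
/-!
Writing an arbitrary `y` as `G x - k` with `k ∈ K` (the ZKR condition) gives, for every multiplier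
`μ`, the lower bound `μ y = μ (G x) - μ k ≥ -c x`, which does not depend on `μ`. Applied to `y` and
`-y` this bounds the multipliers pointwise, hence in operator norm by Banach–Steinhaus. The
multiplier set is an intersection of closed half-spaces and hyperplanes, so it is compact in the
finite-dimensional dual.
-/

section LagrangeMultipliers

variable {E F : Type*} [NormedAddCommGroup E] [NormedSpace ℝ E]
  [NormedAddCommGroup F] [NormedSpace ℝ F]

/-- The set `Λ`; its second condition says `μ ∈ K°`. -/
def lagrangeMultipliers (G : E →L[ℝ] F) (K : Set F) (c : E →L[ℝ] ℝ) : Set (F →L[ℝ] ℝ) :=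
  {μ | (∀ v, c v + μ (G v) = 0) ∧ ∀ y ∈ K, μ y ≤ 0}

variable {G : E →L[ℝ] F} {K : Set F} {c : E →L[ℝ] ℝ}

theorem isClosed_lagrangeMultipliers : IsClosed (lagrangeMultipliers G K c) := by
  simp only [lagrangeMultipliers, Set.ofPred_and, Set.ofPred_forall]
  refine (isClosed_iInter fun v => isClosed_eq (by fun_prop) continuous_const).inter
    (isClosed_iInter fun y => isClosed_iInter fun _ => isClosed_le (by fun_prop) continuous_const)

theorem neg_le_apply_of_mem_lagrangeMultipliers {μ : F →L[ℝ] ℝ}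
    (hμ : μ ∈ lagrangeMultipliers G K c) {x : E} {k y : F} (hk : k ∈ K) (hy : G x - k = y) :
    -c x ≤ μ y := by
  have hGx := hμ.1 x
  have hμk := hμ.2 k hk
  rw [← hy, map_sub]
  linarith

theorem isBounded_lagrangeMultipliers [CompleteSpace F]
    (hZKR : ∀ y : F, ∃ (x : E) (k : F), k ∈ K ∧ G x - k = y) :
    Bornology.IsBounded (lagrangeMultipliers G K c) := by
  choose x k hk hGx using hZKR
  have pointwise (y : F) :
      ∃ C, ∀ μ : lagrangeMultipliers G K c, ‖(μ : F →L[ℝ] ℝ) y‖ ≤ C := by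
    refine ⟨max |c (x y)| |c (x (-y))|, fun ⟨μ, hμ⟩ => ?_⟩
    have lower := neg_le_apply_of_mem_lagrangeMultipliers hμ (hk y) (hGx y)
    have upper := neg_le_apply_of_mem_lagrangeMultipliers hμ (hk (-y)) (hGx (-y))
    rw [map_neg] at upper
    rw [Real.norm_eq_abs, abs_le]
    constructor <;>
      linarith [le_abs_self (c (x y)), le_abs_self (c (x (-y))),
        le_max_left |c (x y)| |c (x (-y))|, le_max_right |c (x y)| |c (x (-y))|]
  obtain ⟨C, hC⟩ := banach_steinhaus pointwise
  exact isBounded_iff_forall_norm_le.2 ⟨C, fun μ hμ => hC ⟨μ, hμ⟩⟩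

theorem isCompact_lagrangeMultipliers [FiniteDimensional ℝ F]
    (hZKR : ∀ y : F, ∃ (x : E) (k : F), k ∈ K ∧ G x - k = y) :
    IsCompact (lagrangeMultipliers G K c) :=
  haveI := FiniteDimensional.complete ℝ F
  Metric.isCompact_of_isClosed_isBounded isClosed_lagrangeMultipliers
    (isBounded_lagrangeMultipliers hZKR)

end LagrangeMultipliers

theorem stmt_10_general {m n : ℕ}
    (G : (Fin m → ℝ) →L[ℝ] (Fin n → ℝ))
    (K : Set (Fin n → ℝ))
    (hZKR : ∀ y : Fin n → ℝ, ∃ (x : Fin m → ℝ) (c : Fin n → ℝ), c ∈ K ∧ G x - c = y)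
    (c : (Fin m → ℝ) →L[ℝ] ℝ) :
    IsCompact {μ : (Fin n → ℝ) →L[ℝ] ℝ |
      (∀ v, c v + μ (G v) = 0) ∧ ∀ y ∈ K, μ y ≤ 0} :=
  isCompact_lagrangeMultipliers hZKR

theorem stmt_10 {m n : ℕ}
    (G : (Fin m → ℝ) →L[ℝ] (Fin n → ℝ))
    (K : Set (Fin n → ℝ)) (hclosed : IsClosed K) (hconv : Convex ℝ K)
    (hcone : ∀ (a : ℝ), 0 < a → ∀ y ∈ K, a • y ∈ K)
    (hZKR : ∀ y : Fin n → ℝ, ∃ (x : Fin m → ℝ) (c : Fin n → ℝ), c ∈ K ∧ G x - c = y)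
    (c : (Fin m → ℝ) →L[ℝ] ℝ) :
    IsCompact {μ : (Fin n → ℝ) →L[ℝ] ℝ |
      (∀ v, c v + μ (G v) = 0) ∧ ∀ y ∈ K, μ y ≤ 0} :=
  stmt_10_general G K hZKR c
end

section
/- Let f : ℝ^m → ℝ and g : ℝ^m → ℝ^n be twice continuously differentiable, K = {y : A y ≤ 0, W y = 0} a polyhedral cone, and suppose x* with g(x*) = 0 is feasible and (x*, μ) satisfies the KKT conditions: f'(x*) + μ g'(x*) = 0 and μ ∈ K°. Assume the second-order sufficient condition: L''(x*)[v,v] > 0 for all nonzero v in the critical cone C = {v : g'(x*)v ∈ K, f'(x*)v = 0}, where L(x) = f(x) + μ(g(x)). Then x* is a strict local minimizer of f subject to g(x) ∈ K. -/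
/-!
Suppose `x*` is not a strict local minimizer: there are feasible `x* + dⱼ → x*`, `dⱼ ≠ 0`, with
`f (x* + dⱼ) ≤ f x*`, and after passing to a subsequence the directions `dⱼ / ‖dⱼ‖` converge to a
unit vector `v`. Since `K` is a closed cone, `g'(x*) v ∈ K`, and `f'(x*) v ≤ 0`; the KKT conditions
give `f'(x*) v = -μ (g'(x*) v) ≥ 0`, so `v` is critical. As `μ ≤ 0` on `K`, the Lagrangian satisfies
`L (x* + dⱼ) ≤ L x*` with `L'(x*) = 0`, and two mean value steps on the segment give
`L''(x* + θⱼ dⱼ)[dⱼ, dⱼ] ≤ 0`; dividing by `‖dⱼ‖²` and passing to the limit contradicts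
`L''(x*)[v, v] > 0`.
-/

open Filter Topology Set

lemma exists_mem_Ioo_deriv2_nonpos {φ φ' φ'' : ℝ → ℝ} (hφ : ∀ t, HasDerivAt φ (φ' t) t)
    (hφ' : ∀ t, HasDerivAt φ' (φ'' t) t) (hle : φ 1 ≤ φ 0) (hφ'0 : φ' 0 = 0) :
    ∃ θ ∈ Ioo (0 : ℝ) 1, φ'' θ ≤ 0 := by
  obtain ⟨ξ, hξ, hφ'ξ⟩ := exists_hasDerivAt_eq_slope φ φ' zero_lt_one
    (fun t _ => (hφ t).continuousAt.continuousWithinAt) (fun t _ => hφ t)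
  obtain ⟨θ, hθ, hφ''θ⟩ := exists_hasDerivAt_eq_slope φ' φ'' hξ.1
    (fun t _ => (hφ' t).continuousAt.continuousWithinAt) (fun t _ => hφ' t)
  refine ⟨θ, ⟨hθ.1, hθ.2.trans hξ.2⟩, ?_⟩
  rw [hφ''θ, hφ'0, sub_zero, sub_zero]
  refine div_nonpos_of_nonpos_of_nonneg ?_ hξ.1.le
  rw [hφ'ξ, sub_zero, div_one]
  exact sub_nonpos.2 hle

section SecondOrder

variable {E : Type*} [NormedAddCommGroup E] [NormedSpace ℝ E] {L : E → ℝ}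

lemma exists_mem_Ioo_fderiv_fderiv_apply_nonpos (hL : ContDiff ℝ 2 L) {x d : E}
    (hL' : fderiv ℝ L x = 0) (hle : L (x + d) ≤ L x) :
    ∃ θ ∈ Ioo (0 : ℝ) 1, fderiv ℝ (fderiv ℝ L) (x + θ • d) d d ≤ 0 := by
  have hline : ∀ t : ℝ, HasDerivAt (fun s : ℝ => x + s • d) d t := fun t => by
    simpa using ((hasDerivAt_id t).smul_const d).const_add x
  have hL1 : ContDiff ℝ 1 (fderiv ℝ L) := hL.fderiv_right (m := 1) (by norm_num)
  refine exists_mem_Ioo_deriv2_nonpos (φ := fun t => L (x + t • d))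
    (φ' := fun t => fderiv ℝ L (x + t • d) d) (fun t => ?_) (fun t => ?_) (by simpa using hle)
    (by simp [hL'])
  · exact (hL.differentiable (by norm_num) _).hasFDerivAt.comp_hasDerivAt t (hline t)
  · simpa using ((hL1.differentiable one_ne_zero _).hasFDerivAt.comp_hasDerivAt t
      (hline t)).clm_apply (hasDerivAt_const t d)

lemma fderiv_fderiv_apply_nonpos_of_tendsto {α : Type*} {l : Filter α} [l.NeBot]
    (hL : ContDiff ℝ 2 L) {x v : E} (hL' : fderiv ℝ L x = 0) {d : α → E}
    (hd : Tendsto d l (𝓝 0)) (hdir : Tendsto (fun j => ‖d j‖⁻¹ • d j) l (𝓝 v))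
    (hle : ∀ j, L (x + d j) ≤ L x) :
    fderiv ℝ (fderiv ℝ L) x v v ≤ 0 := by
  choose θ hθ hθle using fun j => exists_mem_Ioo_fderiv_fderiv_apply_nonpos hL hL' (hle j)
  have hy : Tendsto (fun j => x + θ j • d j) l (𝓝 x) := by
    have hθd : Tendsto (fun j => θ j • d j) l (𝓝 0) := by
      refine squeeze_zero_norm (fun j => ?_) (tendsto_norm_zero.comp hd)
      rw [norm_smul, Real.norm_of_nonneg (hθ j).1.le]
      exact mul_le_of_le_one_left (norm_nonneg _) (hθ j).2.le
    simpa using tendsto_const_nhds.add hθd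
  have hcont : Continuous fun p : E × E => fderiv ℝ (fderiv ℝ L) p.1 p.2 p.2 := by
    have := (hL.fderiv_right (m := 1) (by norm_num)).continuous_fderiv one_ne_zero
    fun_prop
  refine le_of_tendsto ((hcont.tendsto (x, v)).comp (hy.prodMk_nhds hdir))
    (Eventually.of_forall fun j => ?_)
  simp only [Function.comp_apply, map_smul, smul_apply, smul_eq_mul]
  have hc : 0 ≤ ‖d j‖⁻¹ := by positivity
  exact mul_nonpos_of_nonneg_of_nonpos hc (mul_nonpos_of_nonneg_of_nonpos hc (hθle j))

end SecondOrder

section PolyhedralCone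

variable {E F ι : Type*} [NormedAddCommGroup E] [NormedSpace ℝ E] [FiniteDimensional ℝ E]
  [NormedAddCommGroup F] [NormedSpace ℝ F] (A : E →ₗ[ℝ] (ι → ℝ)) (W : E →ₗ[ℝ] F)

lemma isClosed_polyhedralCone : IsClosed {y | (∀ i, A y i ≤ 0) ∧ W y = 0} := by
  rw [ofPred_and, ofPred_forall]
  exact (isClosed_iInter fun i => isClosed_le
      ((continuous_apply i).comp A.continuous_of_finiteDimensional) continuous_const).inter
    (isClosed_eq W.continuous_of_finiteDimensional continuous_const)

omit [FiniteDimensional ℝ E] in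
lemma smul_mem_polyhedralCone {c : ℝ} (hc : 0 ≤ c) {y : E}
    (hy : y ∈ {y | (∀ i, A y i ≤ 0) ∧ W y = 0}) :
    c • y ∈ {y | (∀ i, A y i ≤ 0) ∧ W y = 0} := by
  refine ⟨fun i => ?_, by simp [hy.2]⟩
  simpa using mul_nonpos_of_nonneg_of_nonpos hc (hy.1 i)

end PolyhedralCone

lemma HasFDerivAt.tendsto_inv_norm_smul_sub {E F α : Type*} [NormedAddCommGroup E]
    [NormedSpace ℝ E] [NormedAddCommGroup F] [NormedSpace ℝ F] {φ : E → F} {φ' : E →L[ℝ] F}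
    {x v : E} (hφ : HasFDerivAt φ φ' x) {l : Filter α} {d : α → E} (hd : Tendsto d l (𝓝 0))
    (hdir : Tendsto (fun j => ‖d j‖⁻¹ • d j) l (𝓝 v)) :
    Tendsto (fun j => ‖d j‖⁻¹ • (φ (x + d j) - φ x)) l (𝓝 (φ' v)) :=
  hφ.hasFDerivWithinAt.lim hd (Eventually.of_forall fun _ => mem_univ _) hdir

lemma exists_seq_tendsto_direction_of_frequently {E : Type*} [NormedAddCommGroup E]
    [NormedSpace ℝ E] [ProperSpace E] {x : E} {P : E → Prop} (h : ∃ᶠ y in 𝓝[≠] x, P y) :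
    ∃ (d : ℕ → E) (v : E), v ≠ 0 ∧ Tendsto d atTop (𝓝 0) ∧
      Tendsto (fun j => ‖d j‖⁻¹ • d j) atTop (𝓝 v) ∧ ∀ j, P (x + d j) := by
  obtain ⟨y, hy, hPy⟩ := frequently_iff_seq_forall.1 (frequently_nhdsWithin_iff.1 h)
  have hsphere : ∀ j, ‖y j - x‖⁻¹ • (y j - x) ∈ Metric.sphere (0 : E) 1 := fun j => by
    simp [norm_smul, sub_ne_zero.2 (hPy j).2]
  obtain ⟨v, hv, ψ, hψ, hdir⟩ := (isCompact_sphere (0 : E) 1).tendsto_subseq hsphere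
  refine ⟨fun j => y (ψ j) - x, v, ne_zero_of_mem_unit_sphere ⟨v, hv⟩, ?_, hdir,
    fun j => by simpa using (hPy (ψ j)).1⟩
  exact tendsto_sub_nhds_zero_iff.2 (hy.comp hψ.tendsto_atTop)

theorem stmt_16 {m n l k : ℕ}
    (f : EuclideanSpace ℝ (Fin m) → ℝ)
    (g : EuclideanSpace ℝ (Fin m) → EuclideanSpace ℝ (Fin n))
    (hf : ContDiff ℝ 2 f) (hg : ContDiff ℝ 2 g)
    (A : (EuclideanSpace ℝ (Fin n)) →ₗ[ℝ] (Fin l → ℝ))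
    (W : (EuclideanSpace ℝ (Fin n)) →ₗ[ℝ] (Fin (n - k) → ℝ))
    (K : Set (EuclideanSpace ℝ (Fin n)))
    (hK : K = {y | (∀ i, A y i ≤ 0) ∧ W y = 0})
    (xs : EuclideanSpace ℝ (Fin m)) (hfeas : g xs = 0)
    (μ : (EuclideanSpace ℝ (Fin n)) →L[ℝ] ℝ)
    (hKKT1 : ∀ v, fderiv ℝ f xs v + μ (fderiv ℝ g xs v) = 0)
    (hKKT2 : ∀ y ∈ K, μ y ≤ 0)
    (hSOSC : ∀ v : EuclideanSpace ℝ (Fin m), v ≠ 0 →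
      fderiv ℝ g xs v ∈ K → fderiv ℝ f xs v = 0 →
      0 < fderiv ℝ (fderiv ℝ (fun x => f x + μ (g x))) xs v v) :
    ∃ U ∈ 𝓝 xs, ∀ x ∈ U, g x ∈ K → x ≠ xs → f xs < f x := by
  by_contra hmin
  rw [← eventually_iff_exists_mem, not_eventually] at hmin
  have hfreq : ∃ᶠ x in 𝓝[≠] xs, g x ∈ K ∧ f x ≤ f xs :=
    frequently_nhdsWithin_iff.2 (hmin.mono fun x hx => by push Not at hx; tauto)
  obtain ⟨d, v, hv, hd, hdir, hdP⟩ := exists_seq_tendsto_direction_of_frequently hfreq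
  have hfd := (hf.differentiable (by norm_num) xs).hasFDerivAt
  have hgd := (hg.differentiable (by norm_num) xs).hasFDerivAt
  have hgv : fderiv ℝ g xs v ∈ K := by
    subst hK
    refine (isClosed_polyhedralCone A W).mem_of_tendsto (hgd.tendsto_inv_norm_smul_sub hd hdir)
      (Eventually.of_forall fun j => ?_)
    rw [hfeas, sub_zero]
    exact smul_mem_polyhedralCone A W (by positivity) (hdP j).1
  have hfv : fderiv ℝ f xs v = 0 := by
    refine le_antisymm (le_of_tendsto (hfd.tendsto_inv_norm_smul_sub hd hdir)
      (Eventually.of_forall fun j => ?_)) (by linarith [hKKT1 v, hKKT2 _ hgv])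
    exact smul_nonpos_of_nonneg_of_nonpos (by positivity) (sub_nonpos.2 (hdP j).2)
  have hL' : fderiv ℝ (fun x => f x + μ (g x)) xs = 0 := by
    have hLd : HasFDerivAt (fun x => f x + μ (g x)) (fderiv ℝ f xs + μ.comp (fderiv ℝ g xs)) xs :=
      hfd.add (μ.hasFDerivAt.comp xs hgd)
    rw [hLd.fderiv]
    ext w
    simpa using hKKT1 w
  refine (hSOSC v hv hgv hfv).not_ge (fderiv_fderiv_apply_nonpos_of_tendsto
    (hf.add (μ.contDiff.comp hg)) hL' hd hdir fun j => ?_)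
  change f (xs + d j) + μ (g (xs + d j)) ≤ f xs + μ (g xs)
  rw [hfeas, map_zero, add_zero]
  linarith [hKKT2 _ (hdP j).1, (hdP j).2]
end
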